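/- arXiv:quant-ph/0508042 — 4 statements merged into one kernel-verified Lean document; each statement's English description precedes it below -/
import Mathlib

section
/- For all Booleans x₁, x₂, x₃, y₁, y₂, y₃, a', b', a'', b'': set x' = ¬x₁ ⊕ x₂, y' = y₁ ⊕ y₂, x'' = ¬x₂ ⊕ x₃, y'' = y₂ ⊕ y₃, and suppose a' ⊕ b' = x' ∧ y'' and a'' ⊕ b'' = x'' ∧ y'. Define a = (x' ∧ x'') ⊕ a' ⊕ a'' and b = (y' ∧ y'') ⊕ b' ⊕ b''. Then a ⊕ b = true if x₁ ⊕ y₁ = x₂ ⊕ y₂ = x₃ ⊕ y₃, and a ⊕ b = false otherwise. (Correctness of the nonlocal-equality protocol using two perfect nonlocal boxes.) -/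
/-- Correctness of the nonlocal-equality protocol using two perfect nonlocal boxes. -/
theorem nonlocal_equality_protocol (x₁ x₂ x₃ y₁ y₂ y₃ a' b' a'' b'' : Bool)
    (h₁ : (a' ^^ b') = ((!x₁ ^^ x₂) && (y₂ ^^ y₃)))
    (h₂ : (a'' ^^ b'') = ((!x₂ ^^ x₃) && (y₁ ^^ y₂))) :
    ((((!x₁ ^^ x₂) && (!x₂ ^^ x₃)) ^^ (a' ^^ a'')) ^^
        (((y₁ ^^ y₂) && (y₂ ^^ y₃)) ^^ (b' ^^ b''))) =
      (if (x₁ ^^ y₁) = (x₂ ^^ y₂) ∧ (x₂ ^^ y₂) = (x₃ ^^ y₃) then true else false) := by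
  revert h₁ h₂; revert x₁ x₂ x₃ y₁ y₂ y₃ a' b' a'' b''; decide
end

section
/- For all Booleans x₁, x₂, x₃, y₁, y₂, y₃, a, b: suppose a ⊕ b = true if and only if x₁ ⊕ y₁ = x₂ ⊕ y₂ = x₃ ⊕ y₃. Define a' = ¬a ⊕ x₁ ⊕ x₂ ⊕ x₃ and b' = b ⊕ y₁ ⊕ y₂ ⊕ y₃. Then a' ⊕ b' = Maj(x₁ ⊕ y₁, x₂ ⊕ y₂, x₃ ⊕ y₃). (Correctness of the reduction of nonlocal majority to nonlocal equality.) -/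
/-- The majority of three Booleans. -/
def maj (u v w : Bool) : Bool := (u && v) || (v && w) || (u && w)

/-- Correctness of the reduction of nonlocal majority to nonlocal equality:
if `a ⊕ b` indicates the equality of the three distributed bits, then
`a' = ¬a ⊕ x₁ ⊕ x₂ ⊕ x₃` and `b' = b ⊕ y₁ ⊕ y₂ ⊕ y₃` satisfy
`a' ⊕ b' = Maj(x₁ ⊕ y₁, x₂ ⊕ y₂, x₃ ⊕ y₃)`. -/
theorem nonlocal_majority_from_equality (x₁ x₂ x₃ y₁ y₂ y₃ a b : Bool)
    (h : (a ^^ b) = true ↔ ((x₁ ^^ y₁) = (x₂ ^^ y₂) ∧ (x₂ ^^ y₂) = (x₃ ^^ y₃))) :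
    ((!a ^^ (x₁ ^^ (x₂ ^^ x₃))) ^^ (b ^^ (y₁ ^^ (y₂ ^^ y₃)))) =
      maj (x₁ ^^ y₁) (x₂ ^^ y₂) (x₃ ^^ y₃) := by
  revert h; cases x₁ <;> cases x₂ <;> cases x₃ <;> cases y₁ <;> cases y₂ <;> cases y₃ <;> cases a <;> cases b <;> simp [maj]
end

section
/- Let q be a real number with 5/6 < q ≤ 1, let δ = q − 5/6 and s = 1/2 + 3√δ / (2√(1 + 3δ)), and define h(p) = q(p³ + 3p²(1−p)) + (1−q)(3p(1−p)² + (1−p)³). Then for every real p with 1/2 < p < s, one has p < h(p) < s. -/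
set_option maxHeartbeats 1600000

/-- Lemma 3 of the paper: for `5/6 < q ≤ 1`, with `δ = q - 5/6`,
`s = 1/2 + 3√δ/(2√(1+3δ))` and
`h(p) = q(p³ + 3p²(1-p)) + (1-q)(3p(1-p)² + (1-p)³)`,
every `p` with `1/2 < p < s` satisfies `p < h(p) < s`. -/
theorem majority_amplification (q : ℝ) (hq : 5/6 < q) (hq1 : q ≤ 1)
    (δ s : ℝ) (hδ : δ = q - 5/6)
    (hs : s = 1/2 + 3 * Real.sqrt δ / (2 * Real.sqrt (1 + 3 * δ)))
    (h : ℝ → ℝ)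
    (hh : ∀ p : ℝ, h p = q * (p^3 + 3*p^2*(1-p)) + (1-q) * (3*p*(1-p)^2 + (1-p)^3))
    (p : ℝ) (hp : 1/2 < p) (hps : p < s) :
    p < h p ∧ h p < s := by
  have hδpos : 0 < δ := by rw [hδ]; linarith
  have h13 : (0:ℝ) < 1 + 3*δ := by linarith
  have hA : Real.sqrt δ ^ 2 = δ := Real.sq_sqrt hδpos.le
  have hB : Real.sqrt (1+3*δ) ^ 2 = 1 + 3*δ := Real.sq_sqrt h13.le
  have hBpos : 0 < Real.sqrt (1+3*δ) := Real.sqrt_pos.mpr h13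
  have hu2 : 4*(1+3*δ)*(s-1/2)^2 = 9*δ := by
    have hsu : s - 1/2 = 3*Real.sqrt δ/(2*Real.sqrt (1+3*δ)) := by rw [hs]; ring
    rw [hsu]
    field_simp
    nlinarith [hA, hB]
  have hδle : δ ≤ 1/6 := by rw [hδ]; linarith
  have ht : 0 < p - 1/2 := by linarith
  have hupos : 0 < s - 1/2 := by linarith
  have huhalf : s - 1/2 ≤ 1/2 := by
    by_contra hc
    push_neg at hc
    have hsq : (1/2:ℝ)^2 < (s-1/2)^2 := by nlinarith
    have h2 : (1+3*δ)*((1/2:ℝ)^2) < (1+3*δ)*((s-1/2)^2) :=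
      mul_lt_mul_of_pos_left hsq h13
    nlinarith [h2, hu2]
  have hQ : q = δ + 5/6 := by rw [hδ]; ring
  subst hQ
  rw [hh]
  constructor
  · have key1 : (δ + 5/6) * (p^3 + 3*p^2*(1-p)) + (1-(δ + 5/6)) * (3*p*(1-p)^2 + (1-p)^3) - p
        = (4/3)*(1+3*δ)*(p-1/2)*((s-1/2)^2 - (p-1/2)^2)
          - ((p-1/2)/3)*(4*(1+3*δ)*(s-1/2)^2 - 9*δ) := by ring
    have hz : 4*(1+3*δ)*(s-1/2)^2 - 9*δ = 0 := by linarith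
    rw [hz] at key1
    have hpos : 0 < (4/3)*(1+3*δ)*(p-1/2)*((s-1/2)^2 - (p-1/2)^2) := by
      have : 0 < (s-1/2)^2 - (p-1/2)^2 := by nlinarith
      positivity
    linarith [key1, hpos]
  · have key2 : s - ((δ + 5/6) * (p^3 + 3*p^2*(1-p)) + (1-(δ + 5/6)) * (3*p*(1-p)^2 + (1-p)^3))
        = (1+3*δ)*(s-p)*(1 - (4/3)*((s-1/2)^2 + (s-1/2)*(p-1/2) + (p-1/2)^2))
          + ((s-1/2)/3)*(4*(1+3*δ)*(s-1/2)^2 - 9*δ) := by ring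
    have hz : 4*(1+3*δ)*(s-1/2)^2 - 9*δ = 0 := by linarith
    rw [hz] at key2
    have hlt : p - 1/2 < s - 1/2 := by linarith
    have ht2 : (p-1/2)^2 < (s-1/2)^2 := by
      calc (p-1/2)^2 = (p-1/2)*(p-1/2) := by ring
        _ < (s-1/2)*(s-1/2) := mul_lt_mul' hlt.le hlt ht.le (by linarith)
        _ = (s-1/2)^2 := by ring
    have htu : (s-1/2)*(p-1/2) < (s-1/2)^2 := by
      have := mul_lt_mul_of_pos_left hlt hupos
      calc (s-1/2)*(p-1/2) < (s-1/2)*(s-1/2) := this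
        _ = (s-1/2)^2 := by ring
    have hu4 : (s-1/2)^2 ≤ 1/4 := by
      calc (s-1/2)^2 = (s-1/2)*(s-1/2) := by ring
        _ ≤ (1/2)*(1/2) := mul_le_mul huhalf huhalf hupos.le (by norm_num)
        _ = 1/4 := by norm_num
    have hfac : 0 < 1 - (4/3)*((s-1/2)^2 + (s-1/2)*(p-1/2) + (p-1/2)^2) := by
      linarith
    have hpos : 0 < (1+3*δ)*(s-p)*(1 - (4/3)*((s-1/2)^2 + (s-1/2)*(p-1/2) + (p-1/2)^2)) := by
      have hsp : 0 < s - p := by linarith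
      positivity
    linarith [key2, hpos]
end

section
/- Let q be a real number with 5/6 < q ≤ 1, let δ = q − 5/6 and s = 1/2 + 3√δ / (2√(1 + 3δ)), and define h(p) = q(p³ + 3p²(1−p)) + (1−q)(3p(1−p)² + (1−p)³). Then h(1/2) = 1/2 and h(s) = s; that is, both 1/2 and s are fixed points of h. -/
/-! Writing `p = 1/2 + t`, one has `h p - p = t ((2q - 1)(3/2 - 2t²) - 1)`, so the fixed points
of `h` are `t = 0` and `t² = 3/4 - 1/(2(2q - 1))`. With `q = 5/6 + δ` we get `2q - 1 = 2(1 + 3δ)/3`,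
and the second condition becomes `t² = 9δ / (4(1 + 3δ))`, which is exactly the square of
`s - 1/2`. -/

lemma majority_mix_sub_self (q t : ℝ) :
    q * ((1/2 + t)^3 + 3*(1/2 + t)^2*(1 - (1/2 + t)))
        + (1 - q) * (3*(1/2 + t)*(1 - (1/2 + t))^2 + (1 - (1/2 + t))^3) - (1/2 + t)
      = t * ((2*q - 1) * (3/2 - 2*t^2) - 1) := by
  ring

lemma sq_three_sqrt_div_two_sqrt {δ : ℝ} (hδ : 0 ≤ δ) :
    (3 * √δ / (2 * √(1 + 3 * δ)))^2 = 9 * δ / (4 * (1 + 3 * δ)) := by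
  rw [div_pow, mul_pow, mul_pow, Real.sq_sqrt hδ, Real.sq_sqrt (by linarith)]
  norm_num

lemma two_mul_sub_one_mul_eq_one {δ t : ℝ} (hδ : 1 + 3 * δ ≠ 0)
    (ht : t^2 = 9 * δ / (4 * (1 + 3 * δ))) :
    (2 * (5/6 + δ) - 1) * (3/2 - 2*t^2) = 1 := by
  rw [ht, show 2 * (5/6 + δ) - 1 = 2 * (1 + 3 * δ) / 3 by ring]
  field_simp
  ring

theorem fixed_points_of_h_general (q : ℝ) (hq : 5/6 < q)
    (δ s : ℝ) (hδ : δ = q - 5/6)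
    (hs : s = 1/2 + 3 * Real.sqrt δ / (2 * Real.sqrt (1 + 3 * δ)))
    (h : ℝ → ℝ)
    (hh : ∀ p : ℝ, h p = q * (p^3 + 3*p^2*(1-p)) + (1-q) * (3*p*(1-p)^2 + (1-p)^3)) :
    h (1/2) = 1/2 ∧ h s = s := by
  obtain rfl : q = 5/6 + δ := by linarith
  have hδ0 : 0 ≤ δ := by linarith
  refine ⟨by rw [hh]; ring, ?_⟩
  set t := 3 * √δ / (2 * √(1 + 3 * δ))
  have hprod : (2 * (5/6 + δ) - 1) * (3/2 - 2*t^2) = 1 :=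
    two_mul_sub_one_mul_eq_one (by linarith) (sq_three_sqrt_div_two_sqrt hδ0)
  have hfix := majority_mix_sub_self (5/6 + δ) t
  rw [hprod, sub_self, mul_zero, ← hs] at hfix
  rw [hh]
  linarith

/-- Both `1/2` and `s = 1/2 + 3√δ/(2√(1+3δ))` (with `δ = q - 5/6`) are fixed
points of `h(p) = q(p³ + 3p²(1-p)) + (1-q)(3p(1-p)² + (1-p)³)`. -/
theorem fixed_points_of_h (q : ℝ) (hq : 5/6 < q) (hq1 : q ≤ 1)
    (δ s : ℝ) (hδ : δ = q - 5/6)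
    (hs : s = 1/2 + 3 * Real.sqrt δ / (2 * Real.sqrt (1 + 3 * δ)))
    (h : ℝ → ℝ)
    (hh : ∀ p : ℝ, h p = q * (p^3 + 3*p^2*(1-p)) + (1-q) * (3*p*(1-p)^2 + (1-p)^3)) :
    h (1/2) = 1/2 ∧ h s = s :=
  fixed_points_of_h_general q hq δ s hδ hs h hh
end
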